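/- Let X be a reflexive real Banach space with a normalized 1-symmetric basis (e_n), and let f ∈ L¹(0,1). Then lim_{ε→0} sup{ τ(Q,f) : Q a finite partition of [0,1] into intervals each of length ≤ ε } = 0, where τ(Q,f) = ‖Σ_j (∫_{I_j} f dμ) e_j‖_X for Q = {I_j}. In particular the indefinite integral F(t) = ∫_0^t f dμ belongs to V_X^0. -/

import Mathlib

/-!
Write `φ N = ‖e 0 + ⋯ + e (N - 1)‖`. Since the norm only sees the decreasing rearrangement of
the absolute values of the coefficients, Abel summation against the partial sums gives
`‖∑ aᵢ eᵢ‖ ≤ (∑ |aᵢ| / N + max |aᵢ|) φ N` for every `N`.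

Reflexivity forces `φ N / N → 0`. The closed convex hulls `C K` of the tails `{e n | K ≤ n}` are
weakly compact, so they share a point `x`. Approximating `x` both by a vector `y` supported below
`K` and by a convex combination `z ∈ C K`, unconditionality gives `‖z‖ ≤ ‖y - z‖`, which is small;
averaging the cyclic shifts of such a `z` inside `range N` yields `φ N ≤ N ‖z‖`.

For a partition of small mesh, absolute continuity of the integral makes every `|∫_{I_j} f|`
small while their sum stays below `∫ |f|`; choosing first `N`, then the mesh, makes the bound
small.
-/

open MeasureTheory

noncomputable section

/-- `e` is a normalized 1-symmetric (Schauder) basis of `X`: each `e n` has norm one,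
its linear span is dense, and the norm of finite linear combinations is invariant under
permutations of the indices and changes of signs of the coefficients. -/
def IsSymmetricBasis {X : Type*} [NormedAddCommGroup X] [NormedSpace ℝ X] (e : ℕ → X) : Prop :=
  (∀ n, ‖e n‖ = 1) ∧
  Dense (Submodule.span ℝ (Set.range e) : Set X) ∧
  ∀ (a : ℕ →₀ ℝ) (π : Equiv.Perm ℕ) (ε : ℕ → ℝ), (∀ n, ε n = 1 ∨ ε n = -1) →
    ‖a.sum fun n c => (ε n * c) • e (π n)‖ = ‖a.sum fun n c => c • e n‖

open Filter Topology Finset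

theorem Infinite.exists_perm_apply_eq_of_injOn {ι α : Type*} [Infinite α] {s : Finset ι}
    {p q : ι → α} (hp : Set.InjOn p s) (hq : Set.InjOn q s) :
    ∃ π : Equiv.Perm α, ∀ i ∈ s, π (q i) = p i := by
  set E := hq.bijOn_image.equiv q
  let f : (q '' s : Set α) ↪ α := E.symm.toEmbedding.trans ⟨_, hp.injective⟩
  have hfin : Cardinal.mk (q '' s : Set α) < Cardinal.mk α :=
    (Cardinal.lt_aleph0_of_finite _).trans_le (Cardinal.aleph0_le_mk α)
  obtain ⟨π, hπ⟩ := Cardinal.extend_function_of_lt f hfin ⟨Equiv.refl α⟩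
  refine ⟨π, fun i hi => (hπ ⟨q i, i, hi, rfl⟩).trans ?_⟩
  have : E.symm ⟨q i, i, hi, rfl⟩ = ⟨i, hi⟩ := E.symm_apply_eq.2 rfl
  simp [f, this]

theorem Nat.bijOn_add_mod (r N : ℕ) :
    Set.BijOn (fun i => (i + r) % N) (range N : Set ℕ) (range N : Set ℕ) := by
  have hmaps : Set.MapsTo (fun i => (i + r) % N) (range N : Set ℕ) (range N : Set ℕ) :=
    fun i hi => mem_range.2 (Nat.mod_lt _ (pos_of_gt (mem_range.1 hi)))
  have hinj : Set.InjOn (fun i => (i + r) % N) (range N : Set ℕ) := fun i hi j hj hij =>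
    (Nat.ModEq.add_right_cancel' r hij).eq_of_lt_of_lt (mem_range.1 hi) (mem_range.1 hj)
  exact ⟨hmaps, hinj, surjOn_of_injOn_of_card_le _ hmaps hinj le_rfl⟩

theorem Fin.exists_antitone_abs_comp_perm {n : ℕ} (a : Fin n → ℝ) :
    ∃ b : ℕ → ℝ, Antitone b ∧ b n = 0 ∧
      ∃ σ : Equiv.Perm (Fin n), ∀ i : Fin n, b i = |a (σ i)| := by
  set σ := Tuple.sort fun i => -|a i|
  have hσ : Antitone fun i => |a (σ i)| := fun i j hij => by
    simpa using Tuple.monotone_sort (fun i => -|a i|) hij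
  refine ⟨fun k => if h : k < n then |a (σ ⟨k, h⟩)| else 0, fun k l hkl => ?_, by simp, σ,
    fun i => by simp⟩
  by_cases hl : l < n
  · simpa [hl, hkl.trans_lt hl] using hσ (Fin.mk_le_mk.2 hkl)
  · by_cases hk : k < n <;> simp [hk, hl]

theorem Finset.sum_range_smul_eq_sum_range_sub_smul {R M : Type*} [Ring R] [AddCommGroup M]
    [Module R M] (b : ℕ → R) (v : ℕ → M) (n : ℕ) :
    ∑ i ∈ range n, b i • v i =
      ∑ k ∈ range n, (b k - b (k + 1)) • ∑ i ∈ range (k + 1), v i + b n • ∑ i ∈ range n, v i := by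
  induction n with
  | zero => simp
  | succ n ih =>
    rw [sum_range_succ, ih, sum_range_succ (fun k => (b k - b (k + 1)) • _), sum_range_succ v,
      sub_smul, smul_add]
    abel

theorem exists_sum_eq_of_mem_convexHull_image {ι E : Type*} [AddCommGroup E] [Module ℝ E]
    {v : ι → E} {S : Set ι} {z : E} (hz : z ∈ convexHull ℝ (v '' S)) :
    ∃ (t : Finset ι) (w : ι → ℝ), ↑t ⊆ S ∧ ∑ i ∈ t, w i = 1 ∧ ∑ i ∈ t, w i • v i = z := by
  classical
  rw [Set.image_eq_range, convexHull_range_eq_exists_affineCombination] at hz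
  obtain ⟨t, w, -, hw, rfl⟩ := hz
  refine ⟨t.map (Function.Embedding.subtype _), fun i => if h : i ∈ S then w ⟨i, h⟩ else 0,
    by simp, by simpa using hw, ?_⟩
  rw [affineCombination_eq_linear_combination _ _ _ hw]
  simp

theorem nonempty_iInter_of_surjective_inclusionInDoubleDual {X : Type*} [NormedAddCommGroup X]
    [NormedSpace ℝ X] (hrefl : Function.Surjective (NormedSpace.inclusionInDoubleDual ℝ X))
    {C : ℕ → Set X} (hC : Antitone C) (hne : ∀ n, (C n).Nonempty)
    (hb : Bornology.IsBounded (C 0)) (hconv : ∀ n, Convex ℝ (C n)) (hcl : ∀ n, IsClosed (C n)) :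
    (⋂ n, C n).Nonempty := by
  -- closed convex sets are weakly closed, and reflexivity makes bounded sets weakly compact
  set T : ℕ → Set (WeakSpace ℝ X) := fun n => toWeakSpace ℝ X '' C n
  have hT : ∀ n, closure (T n) = T n := fun n => by
    rw [← (hconv n).toWeakSpace_closure ℝ, (hcl n).closure_eq]
  have hT0 : IsCompact (T 0) := by
    rw [← hT]
    refine NormedSpace.isCompact_closure_of_isBounded ℝ X _
      (by rwa [(toWeakSpace ℝ X).injective.preimage_image]) ?_
    rintro φ -
    obtain ⟨x, hx⟩ := hrefl (StrongDual.toWeakDual.symm φ)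
    exact ⟨toWeakSpace ℝ X x, DFunLike.ext _ _ fun f => DFunLike.congr_fun hx f⟩
  obtain ⟨x, hx⟩ := IsCompact.nonempty_iInter_of_sequence_nonempty_isCompact_isClosed T
    (fun n => Set.image_mono (hC n.le_succ)) (fun n => (hne n).image _) hT0
    (fun n => closure_eq_iff_isClosed.1 (hT n))
  refine ⟨(toWeakSpace ℝ X).symm x, Set.mem_iInter.2 fun n => ?_⟩
  obtain ⟨y, hy, rfl⟩ := Set.mem_iInter.1 hx n
  simpa using hy

theorem exists_forall_mem_closure_convexHull_image_Ici {X : Type*} [NormedAddCommGroup X]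
    [NormedSpace ℝ X] (hrefl : Function.Surjective (NormedSpace.inclusionInDoubleDual ℝ X))
    {u : ℕ → X} (hu : Bornology.IsBounded (Set.range u)) :
    ∃ x, ∀ K, x ∈ closure (convexHull ℝ (u '' Set.Ici K)) := by
  obtain ⟨x, hx⟩ := nonempty_iInter_of_surjective_inclusionInDoubleDual hrefl
    (fun K L hKL => closure_mono (convexHull_mono (Set.image_mono (Set.Ici_subset_Ici.2 hKL))))
    (fun K => ⟨u K, subset_closure (subset_convexHull ℝ _ ⟨K, Set.mem_Ici.2 le_rfl, rfl⟩)⟩)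
    (isBounded_convexHull.2 (hu.subset (Set.image_subset_range _ _))).closure
    (fun K => (convex_convexHull ℝ _).closure) (fun K => isClosed_closure)
  exact ⟨x, Set.mem_iInter.1 hx⟩

theorem MeasureTheory.Integrable.exists_pos_forall_setIntegral_norm_le {α E : Type*}
    [MeasurableSpace α] {μ : Measure α} [NormedAddCommGroup E] {f : α → E}
    (hf : Integrable f μ) {δ : ℝ} (hδ : 0 < δ) :
    ∃ ε > 0, ∀ s, μ s < ε → ∫ x in s, ‖f x‖ ∂μ ≤ δ := by
  have h := hf.norm.tendsto_setIntegral_nhds_zero (l := comap μ (𝓝 0)) (s := id) tendsto_comap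
  obtain ⟨U, hU, hUs⟩ := mem_comap.1 (h (Iic_mem_nhds hδ))
  obtain ⟨ε, hε, hεU⟩ := ENNReal.nhds_zero_basis.mem_iff.1 hU
  exact ⟨ε, hε, fun s hs => hUs (hεU hs)⟩

theorem MeasureTheory.IntegrableOn.exists_pos_forall_setIntegral_abs_Ioo_le {f : ℝ → ℝ}
    {a b : ℝ} (hf : IntegrableOn f (Set.Ioo a b)) {δ : ℝ} (hδ : 0 < δ) :
    ∃ r > 0, ∀ c d, Set.Ioo c d ⊆ Set.Ioo a b → d - c ≤ r →
      ∫ x in Set.Ioo c d, |f x| ≤ δ := by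
  obtain ⟨ε, hε, hsmall⟩ := Integrable.exists_pos_forall_setIntegral_norm_le hf hδ
  obtain ⟨r, -, hr, hrε⟩ := ENNReal.lt_iff_exists_real_btwn.1 hε
  refine ⟨r, ENNReal.ofReal_pos.1 hr, fun c d hcd hlen => ?_⟩
  have h := hsmall (Set.Ioo c d) ((Measure.restrict_apply_le _ _).trans_lt (by
    rw [Real.volume_Ioo]; exact (ENNReal.ofReal_le_ofReal hlen).trans_lt hrε))
  rwa [Measure.restrict_restrict measurableSet_Ioo, Set.inter_eq_left.2 hcd] at h

theorem sum_setIntegral_Ioo_le {g : ℝ → ℝ} (hg0 : ∀ x, 0 ≤ g x) {a b : ℝ}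
    (hg : IntegrableOn g (Set.Ioo a b)) {n : ℕ} {t : Fin (n + 1) → ℝ} (ht : Monotone t)
    (ha : a ≤ t 0) (hb : t (Fin.last n) ≤ b) :
    ∑ i : Fin n, ∫ x in Set.Ioo (t i.castSucc) (t i.succ), g x ≤ ∫ x in Set.Ioo a b, g x := by
  have hsub : ∀ i : Fin n, Set.Ioo (t i.castSucc) (t i.succ) ⊆ Set.Ioo a b := fun i =>
    Set.Ioo_subset_Ioo (ha.trans (ht (Fin.zero_le _))) ((ht (Fin.le_last _)).trans hb)
  have hdisj :
      Pairwise (Function.onFun Disjoint fun i : Fin n => Set.Ioo (t i.castSucc) (t i.succ)) :=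
    (pairwise_disjoint_on _).2 fun i j hij =>
      (Set.Ioc_disjoint_Ioc_of_le (ht (Fin.succ_le_castSucc_iff.2 hij))).mono
        Set.Ioo_subset_Ioc_self Set.Ioo_subset_Ioc_self
  rw [← integral_iUnion_fintype (fun _ => measurableSet_Ioo) hdisj
    (fun i => hg.mono_set (hsub i))]
  exact setIntegral_mono_set hg (Eventually.of_forall hg0) (Set.iUnion_subset hsub).eventuallyLE

def fundamentalFunction {X : Type*} [NormedAddCommGroup X] (e : ℕ → X) (N : ℕ) : ℝ :=
  ‖∑ i ∈ range N, e i‖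

namespace IsSymmetricBasis

variable {X : Type*} [NormedAddCommGroup X] [NormedSpace ℝ X] {e : ℕ → X}

theorem norm_sum_sign_smul_comp (he : IsSymmetricBasis e) {ι : Type*} (s : Finset ι)
    (a ε : ι → ℝ) (hε : ∀ i, ε i = 1 ∨ ε i = -1) {p q : ι → ℕ}
    (hp : Set.InjOn p s) (hq : Set.InjOn q s) :
    ‖∑ i ∈ s, (ε i * a i) • e (p i)‖ = ‖∑ i ∈ s, a i • e (q i)‖ := by
  classical
  rcases s.eq_empty_or_nonempty with rfl | ⟨i₀, -⟩
  · simp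
  have : Nonempty ι := ⟨i₀⟩
  obtain ⟨π, hπ⟩ := Infinite.exists_perm_apply_eq_of_injOn hp hq
  set g := Function.invFunOn q s
  have hg : ∀ i ∈ s, g (q i) = i := fun i hi => hq.leftInvOn_invFunOn hi
  have hsum : ∀ (σ : Equiv.Perm ℕ) (δ : ℕ → ℝ),
      (∑ i ∈ s, Finsupp.single (q i) (a i)).sum (fun n c => (δ n * c) • e (σ n)) =
        ∑ i ∈ s, (δ (q i) * a i) • e (σ (q i)) := by
    intro σ δ
    rw [← Finsupp.sum_finsetSum_index (by simp) (by intros; simp [mul_add, add_smul])]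
    exact sum_congr rfl fun i _ => Finsupp.sum_single_index (by simp)
  have hid := hsum (Equiv.refl ℕ) 1
  simp only [Pi.one_apply, one_mul, Equiv.refl_apply] at hid
  calc ‖∑ i ∈ s, (ε i * a i) • e (p i)‖
      = ‖∑ i ∈ s, ((ε ∘ g) (q i) * a i) • e (π (q i))‖ := by
        congr 1
        exact sum_congr rfl fun i hi => by simp [hg i hi, hπ i hi]
    _ = ‖∑ i ∈ s, a i • e (q i)‖ := by
        rw [← hsum, ← hid, he.2.2 _ π (ε ∘ g) fun n => hε _]

theorem norm_sum_smul_comp (he : IsSymmetricBasis e) {ι : Type*} (s : Finset ι) (a : ι → ℝ)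
    {p q : ι → ℕ} (hp : Set.InjOn p s) (hq : Set.InjOn q s) :
    ‖∑ i ∈ s, a i • e (p i)‖ = ‖∑ i ∈ s, a i • e (q i)‖ := by
  simpa using he.norm_sum_sign_smul_comp s a 1 (fun _ => Or.inl rfl) hp hq

theorem norm_sum_abs_smul_comp (he : IsSymmetricBasis e) {ι : Type*} (s : Finset ι) (a : ι → ℝ)
    {p q : ι → ℕ} (hp : Set.InjOn p s) (hq : Set.InjOn q s) :
    ‖∑ i ∈ s, |a i| • e (p i)‖ = ‖∑ i ∈ s, a i • e (q i)‖ := by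
  rw [← he.norm_sum_sign_smul_comp s a (fun i => if 0 ≤ a i then 1 else -1)
    (fun i => by split_ifs <;> simp) hp hq]
  congr 1
  refine sum_congr rfl fun i _ => ?_
  split_ifs with h
  · rw [abs_of_nonneg h, one_mul]
  · rw [abs_of_neg (not_le.1 h), neg_one_mul]

theorem norm_sum_le_of_subset (he : IsSymmetricBasis e) {s t : Finset ℕ} (hst : s ⊆ t)
    (a : ℕ → ℝ) : ‖∑ i ∈ s, a i • e i‖ ≤ ‖∑ i ∈ t, a i • e i‖ := by
  classical
  set ε : ℕ → ℝ := fun i => if i ∈ s then 1 else -1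
  have hflip : ‖∑ i ∈ t, (ε i * a i) • e i‖ = ‖∑ i ∈ t, a i • e i‖ :=
    he.norm_sum_sign_smul_comp t a ε (fun i => by simp only [ε]; split_ifs <;> simp)
      (Set.injOn_id _) (Set.injOn_id _)
  -- averaging with the sign flip `ε` kills the coordinates in `t \ s`
  have hdouble : (2 : ℝ) • ∑ i ∈ s, a i • e i =
      ∑ i ∈ t, a i • e i + ∑ i ∈ t, (ε i * a i) • e i := by
    rw [← sum_add_distrib, ← sum_subset hst (f := fun i => a i • e i + (ε i * a i) • e i),
      smul_sum]
    · exact sum_congr rfl fun i hi => by simp only [ε, if_pos hi]; module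
    · intro i _ hi
      simp only [ε, if_neg hi]
      module
  have h2 : 2 * ‖∑ i ∈ s, a i • e i‖ ≤ 2 * ‖∑ i ∈ t, a i • e i‖ :=
    calc 2 * ‖∑ i ∈ s, a i • e i‖ = ‖(2 : ℝ) • ∑ i ∈ s, a i • e i‖ := by
          rw [norm_smul, Real.norm_two]
      _ ≤ ‖∑ i ∈ t, a i • e i‖ + ‖∑ i ∈ t, (ε i * a i) • e i‖ := hdouble ▸ norm_add_le _ _
      _ = 2 * ‖∑ i ∈ t, a i • e i‖ := by rw [hflip, two_mul]
  linarith

theorem norm_sum_le_norm_add_sum (he : IsSymmetricBasis e) {s t : Finset ℕ}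
    (hst : Disjoint s t) (a b : ℕ → ℝ) :
    ‖∑ i ∈ t, b i • e i‖ ≤ ‖∑ i ∈ s, a i • e i + ∑ i ∈ t, b i • e i‖ := by
  classical
  set c : ℕ → ℝ := fun i => if i ∈ s then a i else b i
  have hs : ∑ i ∈ s, c i • e i = ∑ i ∈ s, a i • e i :=
    sum_congr rfl fun i hi => by simp [c, hi]
  have ht : ∑ i ∈ t, c i • e i = ∑ i ∈ t, b i • e i :=
    sum_congr rfl fun i hi => by simp [c, disjoint_right.1 hst hi]
  rw [← hs, ← ht, ← sum_union hst]
  exact he.norm_sum_le_of_subset subset_union_right c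

theorem fundamentalFunction_mono (he : IsSymmetricBasis e) : Monotone (fundamentalFunction e) :=
  fun m N h => by
    simpa [fundamentalFunction] using he.norm_sum_le_of_subset (range_subset_range.2 h) 1

theorem fundamentalFunction_add_le (he : IsSymmetricBasis e) (m N : ℕ) :
    fundamentalFunction e (m + N) ≤ fundamentalFunction e m + fundamentalFunction e N := by
  have hshift : ‖∑ i ∈ range N, e (m + i)‖ = fundamentalFunction e N := by
    simpa [fundamentalFunction] using
      he.norm_sum_smul_comp (range N) 1 (add_right_injective m).injOn (Set.injOn_id _)
  rw [fundamentalFunction, sum_range_add, ← hshift]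
  exact norm_add_le _ _

theorem fundamentalFunction_mul_le (he : IsSymmetricBasis e) (k N : ℕ) :
    fundamentalFunction e (k * N) ≤ k * fundamentalFunction e N := by
  induction k with
  | zero => simp [fundamentalFunction]
  | succ k ih =>
    rw [add_mul, one_mul, Nat.cast_succ, add_one_mul]
    exact (he.fundamentalFunction_add_le _ _).trans (by linarith)

theorem fundamentalFunction_le_div_add_one_mul (he : IsSymmetricBasis e) (m : ℕ) {N : ℕ}
    (hN : 0 < N) : fundamentalFunction e m ≤ ((m : ℝ) / N + 1) * fundamentalFunction e N := by
  have hm : m ≤ (m / N + 1) * N := (Nat.lt_div_mul_add hN).le.trans (by rw [add_one_mul])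
  calc fundamentalFunction e m ≤ fundamentalFunction e ((m / N + 1) * N) :=
        he.fundamentalFunction_mono hm
    _ ≤ ((m / N + 1 : ℕ) : ℝ) * fundamentalFunction e N := he.fundamentalFunction_mul_le _ _
    _ ≤ ((m : ℝ) / N + 1) * fundamentalFunction e N := by
        gcongr
        · exact norm_nonneg _
        · push_cast
          gcongr
          exact Nat.cast_div_le

theorem norm_sum_range_le_of_antitone (he : IsSymmetricBasis e) {b : ℕ → ℝ} (hb : Antitone b)
    {n : ℕ} (hbn : b n = 0) {N : ℕ} (hN : 0 < N) :
    ‖∑ i ∈ range n, b i • e i‖ ≤ ((∑ i ∈ range n, b i) / N + b 0) * fundamentalFunction e N := by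
  have hweights : ∑ k ∈ range n, (b k - b (k + 1)) * ((k + 1 : ℕ) : ℝ) = ∑ i ∈ range n, b i := by
    simpa [hbn] using (sum_range_smul_eq_sum_range_sub_smul b (fun _ => (1 : ℝ)) n).symm
  have htelescope : ∑ k ∈ range n, (b k - b (k + 1)) = b 0 := by
    rw [sum_range_sub', hbn, sub_zero]
  rw [sum_range_smul_eq_sum_range_sub_smul, hbn, zero_smul, add_zero, ← hweights,
    ← htelescope, sum_div, ← sum_add_distrib, sum_mul]
  refine (norm_sum_le _ _).trans (sum_le_sum fun k _ => ?_)
  have hk : 0 ≤ b k - b (k + 1) := sub_nonneg.2 (hb k.le_succ)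
  rw [norm_smul, Real.norm_of_nonneg hk]
  calc (b k - b (k + 1)) * fundamentalFunction e (k + 1)
      ≤ (b k - b (k + 1)) * ((((k + 1 : ℕ) : ℝ) / N + 1) * fundamentalFunction e N) :=
        mul_le_mul_of_nonneg_left (he.fundamentalFunction_le_div_add_one_mul _ hN) hk
    _ = _ := by ring

theorem norm_sum_le_of_abs_le (he : IsSymmetricBasis e) {n N : ℕ} (hN : 0 < N) (a : Fin n → ℝ)
    {δ M : ℝ} (hδ0 : 0 ≤ δ) (hδ : ∀ i, |a i| ≤ δ) (hM : ∑ i, |a i| ≤ M) :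
    ‖∑ i : Fin n, a i • e i‖ ≤ (M / N + δ) * fundamentalFunction e N := by
  obtain ⟨b, hb, hbn, σ, hbσ⟩ := Fin.exists_antitone_abs_comp_perm a
  have hsum : ∑ i ∈ range n, b i = ∑ i, |a i| := by
    rw [← Fin.sum_univ_eq_sum_range, ← Equiv.sum_comp σ (fun i => |a i|)]
    exact sum_congr rfl fun i _ => hbσ i
  have hnorm : ‖∑ i ∈ range n, b i • e i‖ = ‖∑ i : Fin n, a i • e i‖ := by
    rw [← Fin.sum_univ_eq_sum_range (fun i => b i • e i),
      ← Equiv.sum_comp σ (fun i => a i • e i)]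
    simp only [hbσ]
    exact he.norm_sum_abs_smul_comp _ (a ∘ σ) (Fin.val_injective.injOn)
      ((Fin.val_injective.comp σ.injective).injOn)
  have hb0 : b 0 ≤ δ := by
    rcases n.eq_zero_or_pos with rfl | hn
    · exact hbn ▸ hδ0
    · simpa [hbσ ⟨0, hn⟩] using hδ (σ ⟨0, hn⟩)
  rw [← hnorm]
  exact (he.norm_sum_range_le_of_antitone hb hbn hN).trans
    (mul_le_mul_of_nonneg_right (by rw [hsum]; gcongr) (norm_nonneg _))

theorem fundamentalFunction_le_mul_norm_sum (he : IsSymmetricBasis e) {t : Finset ℕ} {N : ℕ}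
    (htN : t ⊆ range N) {w : ℕ → ℝ} (hw : ∑ i ∈ t, w i = 1) :
    fundamentalFunction e N ≤ N * ‖∑ i ∈ t, w i • e i‖ := by
  have hrotate : ∀ r, ‖∑ j ∈ t, w j • e ((j + r) % N)‖ = ‖∑ j ∈ t, w j • e j‖ := fun r =>
    he.norm_sum_smul_comp t w ((Nat.bijOn_add_mod r N).injOn.mono (coe_subset.2 htN))
      (Set.injOn_id _)
  have hcycle : ∀ j, ∑ r ∈ range N, e ((j + r) % N) = ∑ i ∈ range N, e i := fun j =>
    have h := Nat.bijOn_add_mod j N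
    sum_nbij _ h.mapsTo h.injOn h.surjOn fun r _ => by rw [add_comm]
  have hsum : ∑ r ∈ range N, ∑ j ∈ t, w j • e ((j + r) % N) = ∑ i ∈ range N, e i := by
    simp_rw [sum_comm (s := range N), ← smul_sum, hcycle, ← sum_smul, hw, one_smul]
  calc fundamentalFunction e N = ‖∑ r ∈ range N, ∑ j ∈ t, w j • e ((j + r) % N)‖ := by
        rw [hsum, fundamentalFunction]
    _ ≤ ∑ r ∈ range N, ‖∑ j ∈ t, w j • e ((j + r) % N)‖ := norm_sum_le _ _
    _ = N * ‖∑ i ∈ t, w i • e i‖ := by simp [hrotate]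

theorem exists_sum_eq_one_norm_lt
    (hrefl : Function.Surjective (NormedSpace.inclusionInDoubleDual ℝ X))
    (he : IsSymmetricBasis e) {θ : ℝ} (hθ : 0 < θ) :
    ∃ (t : Finset ℕ) (w : ℕ → ℝ), ∑ i ∈ t, w i = 1 ∧ ‖∑ i ∈ t, w i • e i‖ < θ := by
  obtain ⟨x, hx⟩ := exists_forall_mem_closure_convexHull_image_Ici hrefl (u := e)
    (isBounded_iff_forall_norm_le.2 ⟨1, by rintro _ ⟨n, rfl⟩; simp [he.1 n]⟩)
  obtain ⟨y, hy, hxy⟩ := he.2.1.exists_dist_lt x (half_pos hθ)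
  obtain ⟨c, rfl⟩ := Finsupp.mem_span_range_iff_exists_finsupp.1 hy
  set K := c.support.sup id + 1
  obtain ⟨z, hz, hxz⟩ := Metric.mem_closure_iff.1 (hx K) _ (half_pos hθ)
  obtain ⟨t, w, htK, hw, rfl⟩ := exists_sum_eq_of_mem_convexHull_image hz
  refine ⟨t, w, hw, ?_⟩
  have hdisj : Disjoint c.support t := disjoint_left.2 fun i hi hit =>
    (Nat.lt_succ_of_le (le_sup (f := id) hi)).not_ge (htK hit)
  -- `y` lives on coordinates below `K` and `z` on coordinates from `K` on, so `‖z‖ ≤ ‖y - z‖`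
  calc ‖∑ i ∈ t, w i • e i‖ = ‖∑ i ∈ t, (-w i) • e i‖ := by simp [sum_neg_distrib]
    _ ≤ ‖∑ i ∈ c.support, c i • e i + ∑ i ∈ t, (-w i) • e i‖ :=
        he.norm_sum_le_norm_add_sum hdisj _ _
    _ = dist (c.sum fun i a => a • e i) (∑ i ∈ t, w i • e i) := by
        simp [dist_eq_norm, Finsupp.sum, sub_eq_add_neg, sum_neg_distrib]
    _ ≤ dist (c.sum fun i a => a • e i) x + dist x (∑ i ∈ t, w i • e i) := dist_triangle _ _ _
    _ < θ := by rw [dist_comm] at hxy; linarith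

theorem tendsto_fundamentalFunction_div_atTop
    (hrefl : Function.Surjective (NormedSpace.inclusionInDoubleDual ℝ X))
    (he : IsSymmetricBasis e) :
    Tendsto (fun N : ℕ => fundamentalFunction e N / N) atTop (𝓝 0) := by
  rw [Metric.tendsto_atTop]
  intro θ hθ
  obtain ⟨t, w, hw, hlt⟩ := he.exists_sum_eq_one_norm_lt hrefl hθ
  refine ⟨t.sup id + 1, fun N hN => ?_⟩
  have htN : t ⊆ range N := fun i hi =>
    mem_range.2 ((Nat.lt_succ_of_le (le_sup (f := id) hi)).trans_le hN)
  have hN0 : (0 : ℝ) < N := by exact_mod_cast (Nat.succ_pos _).trans_le hN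
  rw [Real.dist_0_eq_abs, abs_of_nonneg (by unfold fundamentalFunction; positivity),
    div_lt_iff₀ hN0]
  calc fundamentalFunction e N ≤ N * ‖∑ i ∈ t, w i • e i‖ :=
        he.fundamentalFunction_le_mul_norm_sum htN hw
    _ < N * θ := mul_lt_mul_of_pos_left hlt hN0
    _ = θ * N := mul_comm _ _

end IsSymmetricBasis

theorem small_mesh_variation_tendsto_zero_general
    {X : Type*} [NormedAddCommGroup X] [NormedSpace ℝ X]
    (hrefl : Function.Surjective (NormedSpace.inclusionInDoubleDual ℝ X))
    (e : ℕ → X) (he : IsSymmetricBasis e)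
    (f : ℝ → ℝ) (hf : IntegrableOn f (Set.Ioo (0 : ℝ) 1)) :
    ∀ η > (0 : ℝ), ∃ ε > (0 : ℝ), ∀ (n : ℕ) (t : Fin (n + 1) → ℝ),
      StrictMono t → t 0 = 0 → t (Fin.last n) = 1 →
      (∀ i : Fin n, t i.succ - t i.castSucc ≤ ε) →
      ‖∑ i : Fin n, (∫ x in Set.Ioo (t i.castSucc) (t i.succ), f x) • e (i : ℕ)‖ ≤ η := by
  intro η hη
  set M := ∫ x in Set.Ioo (0 : ℝ) 1, |f x|
  obtain ⟨N, hMN, hN⟩ : ∃ N : ℕ, M * (fundamentalFunction e N / N) < η / 2 ∧ 0 < N := by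
    have h := (he.tendsto_fundamentalFunction_div_atTop hrefl).const_mul M
    rw [mul_zero] at h
    exact ((h.eventually (gt_mem_nhds (half_pos hη))).and (eventually_gt_atTop 0)).exists
  set φN := fundamentalFunction e N
  set δ := η / 2 / (φN + 1)
  have hφN : 0 ≤ φN := norm_nonneg _
  have hδφN : δ * φN ≤ η / 2 := by
    rw [div_mul_eq_mul_div, div_le_iff₀ (by positivity)]
    nlinarith
  obtain ⟨ε, hε, hlocal⟩ := hf.exists_pos_forall_setIntegral_abs_Ioo_le (δ := δ) (by positivity)
  refine ⟨ε, hε, fun n t ht h0 h1 hmesh => ?_⟩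
  have hsub : ∀ i : Fin n, Set.Ioo (t i.castSucc) (t i.succ) ⊆ Set.Ioo 0 1 := fun i =>
    Set.Ioo_subset_Ioo (h0 ▸ ht.monotone (Fin.zero_le _)) (h1 ▸ ht.monotone (Fin.le_last _))
  have hbound := he.norm_sum_le_of_abs_le hN _ (by positivity)
    (fun i => abs_integral_le_integral_abs.trans (hlocal _ _ (hsub i) (hmesh i)))
    ((sum_le_sum fun i _ => abs_integral_le_integral_abs).trans
      (sum_setIntegral_Ioo_le (fun _ => abs_nonneg _) hf.abs ht.monotone h0.ge h1.le))
  calc _ ≤ (M / N + δ) * φN := hbound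
    _ = M * (φN / N) + δ * φN := by ring
    _ ≤ η := by linarith

/-- For `X` reflexive with a normalized 1-symmetric basis and
`f ∈ L¹(0,1)`, the supremum of `τ(Q,f) = ‖Σ_i (∫_{I_i} f dμ) e_i‖` over partitions `Q`
of `[0,1]` into intervals of length at most `ε` tends to `0` as `ε → 0`; in particular
the indefinite integral of `f` belongs to `V_X^0`. -/
theorem small_mesh_variation_tendsto_zero
    {X : Type*} [NormedAddCommGroup X] [NormedSpace ℝ X] [CompleteSpace X]
    (hrefl : Function.Surjective (NormedSpace.inclusionInDoubleDual ℝ X))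
    (e : ℕ → X) (he : IsSymmetricBasis e)
    (f : ℝ → ℝ) (hf : IntegrableOn f (Set.Ioo (0 : ℝ) 1)) :
    ∀ η > (0 : ℝ), ∃ ε > (0 : ℝ), ∀ (n : ℕ) (t : Fin (n + 1) → ℝ),
      StrictMono t → t 0 = 0 → t (Fin.last n) = 1 →
      (∀ i : Fin n, t i.succ - t i.castSucc ≤ ε) →
      ‖∑ i : Fin n, (∫ x in Set.Ioo (t i.castSucc) (t i.succ), f x) • e (i : ℕ)‖ ≤ η :=
  small_mesh_variation_tendsto_zero_general hrefl e he f hf
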